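/- Let $1<p<\infty$, $\varepsilon>0$, $s>0$, and $\mu$ a positive Borel measure on the unit ball $B$ of $\mathbb{C}^n$. If $\sup_{w\in B}\; (\log\tfrac{2}{1-|w|^2})^{p-1+\varepsilon} \int_B \frac{(1-|w|^2)^s}{|1-\langle z,w\rangle|^{s}}\,d\mu(z) < \infty$, then there is $C>0$ with $\mu(Q_\delta(\xi)) \le C\,(\log\frac{2}{\delta})^{1-p-\varepsilon}$ for all $\xi \in S$ and $0<\delta<1$. -/

import Mathlib

open MeasureTheory Metric Set

noncomputable section

/-- `C^n` as a Euclidean space. -/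
abbrev En (n : ℕ) := EuclideanSpace ℂ (Fin n)

instance En.measureSpace {n : ℕ} : MeasureSpace (En n) :=
  { toMeasurableSpace := inferInstance
    volume := Measure.map (WithLp.toLp 2) (volume : Measure (Fin n → ℂ)) }

/-- The Hermitian pairing of z and w. -/
def herm {n : ℕ} (z w : En n) : ℂ := ∑ j, z j * (starRingEnd ℂ) (w j)

/-- The Carleson box Q_delta(xi). -/
def Qbox {n : ℕ} (δ : ℝ) (ξ : En n) : Set (En n) :=
  {z | z ∈ Metric.ball (0 : En n) 1 ∧ ‖1 - herm z ξ‖ < δ}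

/-!
Test the hypothesis at `w = (1 - δ/2) ξ`, for which `1 - |w|² ≍ δ`. On `Q_δ(ξ)` one has
`|1 - ⟨z, w⟩| ≤ |1 - ⟨z, ξ⟩| + (δ/2)|⟨z, ξ⟩| ≤ 3δ/2`, so the kernel `(1 - |w|²)^s / |1 - ⟨z, w⟩|^s`
is at least `3^{-s}` there. Hence `3^{-s} μ(Q_δ(ξ)) (log (2/(1 - |w|²)))^{p-1+ε} ≤ M`, and since
`1 - |w|² ≤ δ` and `p - 1 + ε > 0` this gives `μ(Q_δ(ξ)) ≤ 3^s max(M, 1) (log (2/δ))^{1-p-ε}`.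
-/

section Herm

variable {n : ℕ}

theorem herm_eq_inner (z w : En n) : herm z w = inner ℂ w z := by
  simp [herm, PiLp.inner_apply, RCLike.inner_apply]

theorem norm_herm_le (z w : En n) : ‖herm z w‖ ≤ ‖z‖ * ‖w‖ := by
  rw [herm_eq_inner, mul_comm]
  exact norm_inner_le_norm w z

theorem norm_herm_lt_one {z w : En n} (hz : ‖z‖ < 1) (hw : ‖w‖ ≤ 1) : ‖herm z w‖ < 1 :=
  (norm_herm_le z w).trans_lt (mul_lt_one_of_nonneg_of_lt_one_left (norm_nonneg z) hz hw)

theorem herm_smul_right (c : ℂ) (z w : En n) : herm z (c • w) = starRingEnd ℂ c * herm z w := by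
  simp only [herm_eq_inner, inner_smul_left]

theorem continuous_herm_left (w : En n) : Continuous fun z : En n => herm z w := by
  simp only [herm_eq_inner]
  exact continuous_const.inner continuous_id

theorem measurableSet_Qbox (δ : ℝ) (ξ : En n) : MeasurableSet (Qbox δ ξ) :=
  measurableSet_ball.inter
    (isOpen_lt (continuous_const.sub (continuous_herm_left ξ)).norm continuous_const).measurableSet

end Herm

section RadialPoint

variable {n : ℕ} {δ : ℝ} {ξ : En n}

def radialPoint (δ : ℝ) (ξ : En n) : En n := ((1 - δ / 2 : ℝ) : ℂ) • ξ

theorem norm_radialPoint (hξ : ‖ξ‖ = 1) (hδ : δ ≤ 2) : ‖radialPoint δ ξ‖ = 1 - δ / 2 := by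
  rw [radialPoint, norm_smul, Complex.norm_real, Real.norm_eq_abs, hξ, mul_one,
    abs_of_nonneg (by linarith)]

theorem radialPoint_mem_ball (hξ : ‖ξ‖ = 1) (hδ : 0 < δ) (hδ2 : δ ≤ 2) :
    radialPoint δ ξ ∈ ball (0 : En n) 1 := by
  rw [mem_ball_zero_iff, norm_radialPoint hξ hδ2]
  linarith

theorem half_le_one_sub_norm_radialPoint_sq (hξ : ‖ξ‖ = 1) (hδ : 0 ≤ δ) (hδ2 : δ ≤ 2) :
    δ / 2 ≤ 1 - ‖radialPoint δ ξ‖ ^ 2 := by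
  rw [norm_radialPoint hξ hδ2]
  nlinarith

theorem one_sub_norm_radialPoint_sq_le (hξ : ‖ξ‖ = 1) (hδ2 : δ ≤ 2) :
    1 - ‖radialPoint δ ξ‖ ^ 2 ≤ δ := by
  rw [norm_radialPoint hξ hδ2]
  nlinarith [sq_nonneg δ]

theorem norm_one_sub_herm_radialPoint_le (hξ : ‖ξ‖ = 1) (hδ : 0 ≤ δ) {z : En n}
    (hz : z ∈ Qbox δ ξ) : ‖1 - herm z (radialPoint δ ξ)‖ ≤ 3 * δ / 2 := by
  obtain ⟨hz_ball, hz_box⟩ := hz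
  have hherm : ‖herm z ξ‖ ≤ 1 :=
    (norm_herm_le z ξ).trans (by rw [hξ, mul_one]; exact (mem_ball_zero_iff.mp hz_ball).le)
  have hsplit : 1 - herm z (radialPoint δ ξ) = (1 - herm z ξ) + ((δ / 2 : ℝ) : ℂ) * herm z ξ := by
    rw [radialPoint, herm_smul_right, Complex.conj_ofReal]
    push_cast
    ring
  calc ‖1 - herm z (radialPoint δ ξ)‖
      ≤ ‖1 - herm z ξ‖ + ‖((δ / 2 : ℝ) : ℂ) * herm z ξ‖ := hsplit ▸ norm_add_le _ _
    _ = ‖1 - herm z ξ‖ + δ / 2 * ‖herm z ξ‖ := by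
        rw [norm_mul, Complex.norm_real, Real.norm_of_nonneg (by linarith)]
    _ ≤ δ + δ / 2 * 1 := by gcongr
    _ = 3 * δ / 2 := by ring

theorem inv_three_rpow_le_kernel_radialPoint (hξ : ‖ξ‖ = 1) (hδ : 0 < δ) (hδ2 : δ ≤ 2)
    {s : ℝ} (hs : 0 ≤ s) {z : En n} (hz : z ∈ Qbox δ ξ) :
    (3 : ℝ)⁻¹ ^ s ≤ (1 - ‖radialPoint δ ξ‖ ^ 2) ^ s / ‖1 - herm z (radialPoint δ ξ)‖ ^ s := by
  set w := radialPoint δ ξ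
  have hw : ‖w‖ ≤ 1 := (mem_ball_zero_iff.mp (radialPoint_mem_ball hξ hδ hδ2)).le
  have hden_pos : 0 < ‖1 - herm z w‖ := by
    have := norm_herm_lt_one (mem_ball_zero_iff.mp hz.1) hw
    have := norm_sub_norm_le (1 : ℂ) (herm z w)
    rw [norm_one] at this
    linarith
  have hnum := half_le_one_sub_norm_radialPoint_sq hξ hδ.le hδ2
  have hden := norm_one_sub_herm_radialPoint_le hξ hδ.le hz
  rw [← Real.div_rpow (by linarith) hden_pos.le]
  refine Real.rpow_le_rpow (by norm_num) ?_ hs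
  rw [le_div_iff₀ hden_pos]
  linarith

theorem measure_Qbox_le_lintegral_kernel (μ : Measure (En n)) (hξ : ‖ξ‖ = 1) (hδ : 0 < δ)
    (hδ2 : δ ≤ 2) {s : ℝ} (hs : 0 ≤ s) :
    ENNReal.ofReal ((3 : ℝ)⁻¹ ^ s) * μ (Qbox δ ξ) ≤
      ∫⁻ z in ball (0 : En n) 1, ENNReal.ofReal
        ((1 - ‖radialPoint δ ξ‖ ^ 2) ^ s / ‖1 - herm z (radialPoint δ ξ)‖ ^ s) ∂μ :=
  calc ENNReal.ofReal ((3 : ℝ)⁻¹ ^ s) * μ (Qbox δ ξ)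
      = ∫⁻ _ in Qbox δ ξ, ENNReal.ofReal ((3 : ℝ)⁻¹ ^ s) ∂μ := (setLIntegral_const _ _).symm
    _ ≤ ∫⁻ z in Qbox δ ξ, ENNReal.ofReal
          ((1 - ‖radialPoint δ ξ‖ ^ 2) ^ s / ‖1 - herm z (radialPoint δ ξ)‖ ^ s) ∂μ :=
        setLIntegral_mono' (measurableSet_Qbox δ ξ) fun _ hz =>
          ENNReal.ofReal_le_ofReal (inv_three_rpow_le_kernel_radialPoint hξ hδ hδ2 hs hz)
    _ ≤ _ := lintegral_mono_set fun _ hz => hz.1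

theorem log_two_div_le_log_two_div_one_sub_norm_radialPoint_sq (hξ : ‖ξ‖ = 1) (hδ : 0 < δ)
    (hδ2 : δ ≤ 2) : Real.log (2 / δ) ≤ Real.log (2 / (1 - ‖radialPoint δ ξ‖ ^ 2)) :=
  Real.log_le_log (by positivity) <| div_le_div_of_nonneg_left zero_le_two
    (by linarith [half_le_one_sub_norm_radialPoint_sq hξ hδ.le hδ2])
    (one_sub_norm_radialPoint_sq_le hξ hδ2)

end RadialPoint

theorem ENNReal.le_ofReal_div_of_ofReal_mul_le {a M : ℝ} {x : ENNReal} (ha : 0 < a)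
    (h : ENNReal.ofReal a * x ≤ ENNReal.ofReal M) : x ≤ ENNReal.ofReal (M / a) := by
  rw [ENNReal.ofReal_div_of_pos ha, ENNReal.le_div_iff_mul_le
    (Or.inl (ENNReal.ofReal_pos.mpr ha).ne') (Or.inl ENNReal.ofReal_ne_top), mul_comm]
  exact h

theorem div_rpow_mul_le_div_mul_rpow_neg {ℓ L q c : ℝ} (M : ℝ) (hℓ : 0 < ℓ) (hℓL : ℓ ≤ L)
    (hq : 0 ≤ q) (hc : 0 < c) : M / (L ^ q * c) ≤ max M 1 / c * ℓ ^ (-q) := by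
  have hℓq : 0 < ℓ ^ q := Real.rpow_pos_of_pos hℓ q
  calc M / (L ^ q * c)
      ≤ max M 1 / (ℓ ^ q * c) :=
        div_le_div₀ (zero_le_one.trans (le_max_right M 1)) (le_max_left M 1) (by positivity)
          (mul_le_mul_of_nonneg_right (Real.rpow_le_rpow hℓ.le hℓL hq) hc.le)
    _ = max M 1 / c * ℓ ^ (-q) := by
        rw [Real.rpow_neg hℓ.le]
        field_simp

/-- Lemma 2.2, (iii) implies (i). -/
theorem stmt_4 (n : ℕ) (p ε s : ℝ) (hp : 1 < p) (hε : 0 < ε) (hs : 0 < s)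
    (μ : Measure (En n)) (M : ℝ)
    (hμ : ∀ w ∈ Metric.ball (0 : En n) 1,
      ENNReal.ofReal (Real.log (2 / (1 - ‖w‖ ^ 2)) ^ (p - 1 + ε)) *
        ∫⁻ z in Metric.ball (0 : En n) 1,
          ENNReal.ofReal ((1 - ‖w‖ ^ 2) ^ s / ‖1 - herm z w‖ ^ s) ∂μ
        ≤ ENNReal.ofReal M) :
    ∃ C : ℝ, 0 < C ∧ ∀ ξ ∈ Metric.sphere (0 : En n) 1, ∀ δ : ℝ, 0 < δ → δ < 1 →
      μ (Qbox δ ξ) ≤ ENNReal.ofReal (C * Real.log (2 / δ) ^ (1 - p - ε)) := by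
  refine ⟨max M 1 / (3 : ℝ)⁻¹ ^ s, by positivity, fun ξ hξ δ hδ hδ1 => ?_⟩
  have hξ : ‖ξ‖ = 1 := by simpa using hξ
  have hδ2 : δ ≤ 2 := by linarith
  have hlog_pos : 0 < Real.log (2 / δ) := Real.log_pos (by rw [lt_div_iff₀ hδ]; linarith)
  have hlog := log_two_div_le_log_two_div_one_sub_norm_radialPoint_sq hξ hδ hδ2
  have hL_pos := hlog_pos.trans_le hlog
  have htest : ENNReal.ofReal (Real.log (2 / (1 - ‖radialPoint δ ξ‖ ^ 2)) ^ (p - 1 + ε) *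
      (3 : ℝ)⁻¹ ^ s) * μ (Qbox δ ξ) ≤ ENNReal.ofReal M := by
    rw [ENNReal.ofReal_mul (Real.rpow_nonneg hL_pos.le _), mul_assoc]
    exact (mul_le_mul_right (measure_Qbox_le_lintegral_kernel μ hξ hδ hδ2 hs.le) _).trans
      (hμ _ (radialPoint_mem_ball hξ hδ hδ2))
  refine (ENNReal.le_ofReal_div_of_ofReal_mul_le
    (mul_pos (Real.rpow_pos_of_pos hL_pos _) (by positivity)) htest).trans
    (ENNReal.ofReal_le_ofReal ?_)
  rw [show 1 - p - ε = -(p - 1 + ε) by ring]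
  exact div_rpow_mul_le_div_mul_rpow_neg M hlog_pos hlog (by linarith) (by positivity)
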